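/- Under a recursively balanced picking sequence with sequential allocation and strictly positive utilities, the resulting allocation p satisfies necessary EF1: for all agents i, j, letting t_1 be the first item picked by j, there is an injection f from p(j) \ {t_1} into p(i) such that for every item o in p(j) \ {t_1}, agent i weakly prefers f(o) to o (with respect to i's ordinal preference). -/

import Mathlib

/-
Write `p(a)` in picking order. For `k ≥ 1`, at the turn where `j` makes its pick of index `k`,
`j` has had `k + 1` turns, so by recursive balance `i` has already had at least `k` turns
(for `i = j` this is trivial). Hence `i`'s pick of index `k - 1` was made while `j`'s pick of
index `k` was still available, and `i` weakly prefers it. Sending `j`'s pick of index `k` to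
`i`'s pick of index `k - 1` is the required injection on `p(j)` minus its first item.
-/

open Finset

/-- Sequential allocation with ordinal preferences: each agent on their turn picks a
most-preferred remaining item. -/
def seqValidPref {A O : Type*} [DecidableEq O] (pref : A → O → O → Prop) :
    List A → List O → Finset O → Prop
  | [], [], _ => True
  | a :: s, o :: ps, rem =>
      o ∈ rem ∧ (∀ o' ∈ rem, pref a o o') ∧ seqValidPref pref s ps (rem.erase o)
  | _, _, _ => False

/-- The list of items picked by agent `i`, in picking order. -/
def picksOf {A O : Type*} [DecidableEq A] (seq : List A) (picks : List O) (i : A) : List O :=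
  (seq.zip picks).filterMap (fun x => if x.1 = i then some x.2 else none)

/-- A sequence of turns is recursively balanced if at every prefix the numbers of turns of
any two agents differ by at most one. -/
def RecBalanced {A : Type*} [DecidableEq A] (seq : List A) : Prop :=
  ∀ k : ℕ, ∀ i j : A, (seq.take k).count i ≤ (seq.take k).count j + 1

theorem List.exists_eq_append_cons_countP_eq {α : Type*} (p : α → Bool) :
    ∀ {l : List α} {k : ℕ}, k < l.countP p →
      ∃ u x v, l = u ++ x :: v ∧ p x ∧ u.countP p = k
  | [], _, h => by simp at h
  | y :: l, k, h => by
    by_cases hy : p y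
    · cases k with
      | zero => exact ⟨[], y, l, rfl, hy, rfl⟩
      | succ k =>
        obtain ⟨u, x, v, rfl, hx, hu⟩ :=
          exists_eq_append_cons_countP_eq p (k := k) (by simp [hy] at h; omega)
        exact ⟨y :: u, x, v, rfl, hx, by simp [hy, hu]⟩
    · obtain ⟨u, x, v, rfl, hx, hu⟩ :=
        exists_eq_append_cons_countP_eq p (k := k) (by simpa [List.countP_cons, hy] using h)
      exact ⟨y :: u, x, v, rfl, hx, by simp [hy, hu]⟩

namespace seqValidPref

variable {A O : Type*} [DecidableEq O] {pref : A → O → O → Prop}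

theorem length_eq : ∀ {s : List A} {ps : List O} {rem : Finset O},
    seqValidPref pref s ps rem → s.length = ps.length
  | [], [], _, _ => rfl
  | _ :: _, _ :: _, _, h => by simpa using length_eq h.2.2
  | [], _ :: _, _, h | _ :: _, [], _, h => h.elim

theorem mem_of_mem : ∀ {s : List A} {ps : List O} {rem : Finset O},
    seqValidPref pref s ps rem → ∀ o ∈ ps, o ∈ rem
  | [], [], _, _ => by simp
  | _ :: _, _ :: _, _, h => by
    rintro o (_ | ⟨_, ho⟩)
    exacts [h.1, Finset.mem_of_mem_erase (mem_of_mem h.2.2 o ho)]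
  | [], _ :: _, _, h | _ :: _, [], _, h => h.elim

theorem nodup : ∀ {s : List A} {ps : List O} {rem : Finset O},
    seqValidPref pref s ps rem → ps.Nodup
  | [], [], _, _ => List.nodup_nil
  | _ :: _, o :: _, rem, h => List.nodup_cons.2
    ⟨fun ho => Finset.notMem_erase o rem (mem_of_mem h.2.2 o ho), nodup h.2.2⟩
  | [], _ :: _, _, h | _ :: _, [], _, h => h.elim

theorem pref_of_zip_eq : ∀ {s : List A} {ps : List O} {rem : Finset O},
    seqValidPref pref s ps rem → ∀ {u w : List (A × O)} {a : A} {o : O},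
      s.zip ps = u ++ (a, o) :: w → ∀ y ∈ w, pref a o y.2
  | [], [], _, _, u, _, _, _, hz => by cases u <;> simp at hz
  | _ :: _, _ :: _, _, h, u, w, a, o, hz => by
    cases u with
    | nil =>
      obtain ⟨⟨rfl, rfl⟩, rfl⟩ := by simpa using hz
      exact fun y hy =>
        h.2.1 _ (Finset.mem_of_mem_erase (mem_of_mem h.2.2 _ (List.of_mem_zip hy).2))
    | cons _ u => exact pref_of_zip_eq h.2.2 (List.cons.inj hz).2
  | [], _ :: _, _, h, _, _, _, _, _ | _ :: _, [], _, h, _, _, _, _, _ => h.elim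

end seqValidPref

section picksOf

variable {A O : Type*} [DecidableEq A]

theorem length_filterMap_ite_fst (l : List (A × O)) (a : A) :
    (l.filterMap fun x => if x.1 = a then some x.2 else none).length
      = l.countP fun x => x.1 = a := by
  rw [List.length_filterMap_eq_countP]
  congr 1
  ext x
  split_ifs <;> simp_all

theorem length_picksOf (seq : List A) (picks : List O) (a : A) :
    (picksOf seq picks a).length = (seq.zip picks).countP fun x => x.1 = a :=
  length_filterMap_ite_fst _ a

theorem getElem?_picksOf_of_zip_eq {seq : List A} {picks : List O} {u v : List (A × O)}
    {x : A × O} (h : seq.zip picks = u ++ x :: v) :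
    (picksOf seq picks x.1)[u.countP fun y => y.1 = x.1]? = some x.2 := by
  rw [picksOf, h, List.filterMap_append, ← length_filterMap_ite_fst]
  simp

theorem picksOf_sublist (seq : List A) (picks : List O) (a : A) :
    (picksOf seq picks a).Sublist picks := by
  induction seq generalizing picks with
  | nil => simp [picksOf]
  | cons b seq ih =>
    cases picks with
    | nil => simp [picksOf]
    | cons o picks =>
      have := ih picks
      unfold picksOf at this ⊢
      rw [List.zip_cons_cons, List.filterMap_cons]
      split_ifs
      exacts [this.cons_cons o, this.cons o]

theorem count_take_eq_countP_take_zip {seq : List A} {picks : List O}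
    (h : seq.length = picks.length) (m : ℕ) (a : A) :
    (seq.take m).count a = ((seq.zip picks).take m).countP fun x => x.1 = a := by
  conv_lhs => rw [← List.map_fst_zip h.le, ← List.map_take, List.count_eq_countP, List.countP_map]
  rfl

end picksOf

theorem exists_pref_getElem?_picksOf {A O : Type*} [DecidableEq A] [DecidableEq O]
    {pref : A → O → O → Prop} {seq : List A} {picks : List O} {rem : Finset O}
    (hRB : RecBalanced seq) (hvalid : seqValidPref pref seq picks rem) (i j : A) {k : ℕ}
    (hk : k + 1 < (picksOf seq picks j).length) :
    ∃ o, (picksOf seq picks i)[k]? = some o ∧ pref i o (picksOf seq picks j)[k + 1] := by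
  rw [length_picksOf] at hk
  obtain ⟨u, x, v, hz, hxj, hu⟩ := List.exists_eq_append_cons_countP_eq _ hk
  replace hxj : x.1 = j := of_decide_eq_true hxj
  subst hxj
  have hj : (picksOf seq picks x.1)[k + 1]? = some x.2 := hu ▸ getElem?_picksOf_of_zip_eq hz
  have hi : k < u.countP fun y => y.1 = i := by
    by_cases hij : i = x.1
    · subst hij; omega
    · -- balance at the prefix ending with `j`'s turn `k + 2`
      have hbal := hRB (u.length + 1) x.1 i
      rw [count_take_eq_countP_take_zip hvalid.length_eq,
        count_take_eq_countP_take_zip hvalid.length_eq, hz] at hbal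
      have htake : (u ++ x :: v).take (u.length + 1) = u ++ [x] := by
        rw [List.take_append]; simp
      simp [htake, List.countP_append, hu, Ne.symm hij] at hbal
      omega
  obtain ⟨u', y, w, rfl, hyi, hu'⟩ := List.exists_eq_append_cons_countP_eq _ hi
  replace hyi : y.1 = i := of_decide_eq_true hyi
  subst hyi
  have hz' : seq.zip picks = u' ++ y :: (w ++ x :: v) := by simpa using hz
  refine ⟨y.2, hu' ▸ getElem?_picksOf_of_zip_eq hz', ?_⟩
  obtain ⟨_, hx⟩ := List.getElem?_eq_some_iff.1 hj
  rw [hx]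
  exact hvalid.pref_of_zip_eq hz' x (by simp)

theorem exists_pref_of_mem_picksOf {A O : Type*} [DecidableEq A] [DecidableEq O]
    {pref : A → O → O → Prop} {seq : List A} {picks : List O} {rem : Finset O}
    (hRB : RecBalanced seq) (hvalid : seqValidPref pref seq picks rem) (i : A) {j : A}
    {t₁ o : O} (ht₁ : (picksOf seq picks j).head? = some t₁)
    (ho : o ∈ picksOf seq picks j) (hne : o ≠ t₁) :
    ∃ k o', (picksOf seq picks j).idxOf o = k + 1 ∧ (picksOf seq picks i)[k]? = some o' ∧
      pref i o' o := by
  obtain ⟨k, hk⟩ : ∃ k, (picksOf seq picks j).idxOf o = k + 1 := by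
    refine Nat.exists_eq_add_one.2 (Nat.pos_of_ne_zero fun h0 => hne ?_)
    rw [List.idxOf_eq_zero_iff_eq_nil_or_head_eq] at h0
    rcases h0 with h0 | h0 <;> simp_all
  have hlt := List.idxOf_lt_length_iff.2 ho
  obtain ⟨o', hi, hpref⟩ := exists_pref_getElem?_picksOf hRB hvalid i j (k := k) (by omega)
  refine ⟨k, o', hk, hi, ?_⟩
  simpa only [← hk, List.getElem_idxOf] using hpref

theorem stmt2_general {n : ℕ} {O : Type*} [Fintype O] [DecidableEq O]
    (pref : Fin n → O → O → Prop)
    (seq : List (Fin n)) (hRB : RecBalanced seq)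
    (picks : List O) (hvalid : seqValidPref pref seq picks Finset.univ) :
    ∀ i j : Fin n, ∀ t₁ : O, (picksOf seq picks j).head? = some t₁ →
      ∃ f : O → O,
        Set.InjOn f ((picksOf seq picks j).toFinset.erase t₁) ∧
        ∀ o ∈ (picksOf seq picks j).toFinset.erase t₁,
          f o ∈ (picksOf seq picks i).toFinset ∧ pref i (f o) o := by
  intro i j t₁ ht₁
  have hpick : ∀ o ∈ (picksOf seq picks j).toFinset.erase t₁, ∃ k o',
      (picksOf seq picks j).idxOf o = k + 1 ∧ (picksOf seq picks i)[k]? = some o' ∧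
        pref i o' o := by
    intro o ho
    obtain ⟨hne, hmem⟩ := Finset.mem_erase.1 ho
    exact exists_pref_of_mem_picksOf hRB hvalid i ht₁ (List.mem_toFinset.1 hmem) hne
  refine ⟨fun o => ((picksOf seq picks i)[(picksOf seq picks j).idxOf o - 1]?).getD o,
    ?_, fun o ho => ?_⟩
  · intro o₁ ho₁ o₂ ho₂ heq
    obtain ⟨k₁, a₁, hk₁, ha₁, -⟩ := hpick o₁ ho₁
    obtain ⟨k₂, a₂, hk₂, ha₂, -⟩ := hpick o₂ ho₂
    simp only [hk₁, hk₂, Nat.add_sub_cancel, ha₁, ha₂, Option.getD_some] at heq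
    subst heq
    have hnodup := hvalid.nodup.sublist (picksOf_sublist seq picks i)
    have hk : k₁ = k₂ := (List.getElem?_inj (List.getElem?_eq_some_iff.1 ha₁).1 hnodup).1
      (ha₁.trans ha₂.symm)
    exact (List.idxOf_inj (List.mem_toFinset.1 (Finset.mem_of_mem_erase ho₁))).1 (by omega)
  · obtain ⟨k, a, hk, ha, hpref⟩ := hpick o ho
    simp only [hk, Nat.add_sub_cancel, ha, Option.getD_some]
    exact ⟨List.mem_toFinset.2 (List.mem_of_getElem? ha), hpref⟩

/-- Sequential allocation along a recursively balanced sequence satisfies NEF1: for all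
agents `i, j`, removing the first item `t₁` picked by `j`, there is an injection `f` from
`p(j) \ {t₁}` into `p(i)` with `f o ≿ᵢ o` for all `o`. -/
theorem stmt2 {n : ℕ} {O : Type*} [Fintype O] [DecidableEq O]
    (pref : Fin n → O → O → Prop)
    (htotal : ∀ a x y, pref a x y ∨ pref a y x)
    (htrans : ∀ a : Fin n, Transitive (pref a))
    (seq : List (Fin n)) (hRB : RecBalanced seq)
    (picks : List O) (hvalid : seqValidPref pref seq picks Finset.univ) :
    ∀ i j : Fin n, ∀ t₁ : O, (picksOf seq picks j).head? = some t₁ →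
      ∃ f : O → O,
        Set.InjOn f ((picksOf seq picks j).toFinset.erase t₁) ∧
        ∀ o ∈ (picksOf seq picks j).toFinset.erase t₁,
          f o ∈ (picksOf seq picks i).toFinset ∧ pref i (f o) o :=
  stmt2_general pref seq hRB picks hvalid
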